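/- Let u, v ∈ ℂ. There exist polynomials s1, s2 ∈ ℂ[X] of degree at most 1, not both zero, such that (s1(1), s2for(1)) ∈ ℂ·(1,1) — i.e. s1(1) = s2(1) —, (s1(λ), s2(λ)) ∈ ℂ·(1,u), (s1(t), s2(t)) ∈ ℂ·(1,v), and (coefficient of X in s1, coefficient of X in s2) ∈ ℂ·(0,1), if and only if u·(t−1) + v·(1−λ) + λ − t = 0. (Geometrically: there is an embedding of O(−1) into the trivial rank-two bundle on P¹ passing through the parabolic directions over 1, λ, t and ∞ exactly when u(t−1)+v(1−λ)+λ−t = 0.) -/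
import Mathlib


noncomputable section

open Polynomial

def line (a b : ℂ) : Submodule ℂ (Fin 2 → ℂ) := Submodule.span ℂ {![a, b]}

lemma mem_line_iff (a b x y : ℂ) : ![x, y] ∈ line a b ↔ ∃ c : ℂ, x = c * a ∧ y = c * b := by
  unfold line
  rw [Submodule.mem_span_singleton]
  constructor
  · rintro ⟨c, hc⟩
    refine ⟨c, ?_, ?_⟩
    · have := congrFun hc 0; simpa using this.symm
    · have := congrFun hc 1; simpa using this.symm
  · rintro ⟨c, h0, h1⟩
    refine ⟨c, ?_⟩
    funext i
    fin_cases i <;> simp [h0, h1]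

lemma eval_deg_le_one {p : Polynomial ℂ} (hp : p.degree ≤ 1) (x : ℂ) :
    p.eval x = p.coeff 1 * x + p.coeff 0 := by
  conv_lhs => rw [Polynomial.eq_X_add_C_of_degree_le_one hp]
  simp

/-- an embedding of O(-1) into O ⊕ O passes through the parabolic
directions over 1, λ, t and ∞ iff u(t−1) + v(1−λ) + λ − t = 0. -/
theorem stmt8 (lm tm : ℂ) (hl0 : lm ≠ 0) (hl1 : lm ≠ 1) (ht0 : tm ≠ 0) (ht1 : tm ≠ 1)
    (hlt : lm ≠ tm) (u v : ℂ) :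
    (∃ s1 s2 : Polynomial ℂ, s1.degree ≤ 1 ∧ s2.degree ≤ 1 ∧ ¬(s1 = 0 ∧ s2 = 0) ∧
      ![s1.eval 1, s2.eval 1] ∈ line 1 1 ∧
      ![s1.eval lm, s2.eval lm] ∈ line 1 u ∧
      ![s1.eval tm, s2.eval tm] ∈ line 1 v ∧
      ![s1.coeff 1, s2.coeff 1] ∈ line 0 1) ↔
      u * (tm - 1) + v * (1 - lm) + lm - tm = 0 := by
  constructor
  · rintro ⟨s1, s2, hd1, hd2, hnz, h1, hL, ht, hI⟩
    rw [mem_line_iff] at h1 hL ht hI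
    obtain ⟨c1, hc1a, hc1b⟩ := h1
    obtain ⟨c2, hc2a, hc2b⟩ := hL
    obtain ⟨c3, hc3a, hc3b⟩ := ht
    obtain ⟨c4, hc4a, hc4b⟩ := hI
    have hs1c : s1.coeff 1 = 0 := by simpa using hc4a
    set c := s1.coeff 0 with hc
    set a := s2.coeff 0 with ha
    set b := s2.coeff 1 with hb
    have E1 : s2.eval 1 = s1.eval 1 := by rw [hc1b, hc1a]
    have E2 : s2.eval lm = u * s1.eval lm := by
      rw [hc2b, hc2a]; ring
    have E3 : s2.eval tm = v * s1.eval tm := by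
      rw [hc3b, hc3a]; ring
    rw [eval_deg_le_one hd1, eval_deg_le_one hd2, hs1c] at E1 E2 E3
    -- E1 : b * 1 + a = 0 * 1 + c, etc.
    have hcne : c ≠ 0 := by
      intro hc0
      apply hnz
      have hb0 : b = 0 := by
        have : b * (lm - 1) = 0 := by linear_combination E2 - E1 + (u - 1) * hc0
        rcases mul_eq_zero.1 this with h | h
        · exact h
        · exact absurd (by linear_combination h) hl1
      have ha0 : a = 0 := by linear_combination E1 + hc0 - hb0
      constructor
      · rw [Polynomial.eq_X_add_C_of_degree_le_one hd1, hs1c, ← hc, hc0]; simp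
      · rw [Polynomial.eq_X_add_C_of_degree_le_one hd2, ← hb, ← ha, hb0, ha0]; simp
    have key : c * (u * (tm - 1) + v * (1 - lm) + lm - tm) = 0 := by
      linear_combination -((tm - 1) * E2) - (1 - lm) * E3 - (lm - tm) * E1
    rcases mul_eq_zero.1 key with h | h
    · exact absurd h hcne
    · exact h
  · intro hrel
    have hl1' : lm - 1 ≠ 0 := sub_ne_zero.2 hl1
    set b : ℂ := (u - 1) / (lm - 1) with hbdef
    set a : ℂ := 1 - b with hadef
    refine ⟨1, C b * X + C a, ?_, ?_, ?_, ?_, ?_, ?_, ?_⟩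
    · simpa using Polynomial.degree_one_le
    · exact Polynomial.degree_linear_le
    · rintro ⟨h, -⟩; exact one_ne_zero h
    · rw [mem_line_iff]
      exact ⟨1, by simp, by simp [hadef]⟩
    · rw [mem_line_iff]
      refine ⟨1, by simp, ?_⟩
      simp only [Polynomial.eval_add, Polynomial.eval_mul, Polynomial.eval_C,
        Polynomial.eval_X, Polynomial.eval_one]
      rw [hadef, hbdef]
      field_simp
      ring
    · rw [mem_line_iff]
      refine ⟨1, by simp, ?_⟩
      simp only [Polynomial.eval_add, Polynomial.eval_mul, Polynomial.eval_C,
        Polynomial.eval_X, Polynomial.eval_one]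
      rw [hadef, hbdef]
      field_simp
      linear_combination hrel
    · rw [mem_line_iff]
      refine ⟨b, by simp [Polynomial.coeff_one], ?_⟩
      simp
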